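/- For n ≥ 1, the noncrossing partition lattice (NC_n, ≤_dref) is a supersolvable lattice, with M-chain given by 0̂ = x_1 < x_2 < ... < x_n = 1̂, where x_i has unique non-singleton block [i-1] ∪ {n}. -/

import Mathlib

/-- A set partition of `[n]` (as a setoid on `Fin n`) is noncrossing. -/
def IsNoncrossing {n : ℕ} (x : Setoid (Fin n)) : Prop :=
  ∀ i j k l : Fin n, i < j → j < k → k < l → x.r i k → x.r j l → x.r i j

/-- `B` is a block of the set partition `x`. -/
def IsBlock {n : ℕ} (x : Setoid (Fin n)) (B : Set (Fin n)) : Prop :=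
  ∃ a, B = {b | x.r a b}

/-- The set partition whose unique (possibly) non-singleton block is `S`. -/
def blockSetoid {n : ℕ} (S : Set (Fin n)) : Setoid (Fin n) where
  r a b := a = b ∨ (a ∈ S ∧ b ∈ S)
  iseqv := by
    refine ⟨fun _ => Or.inl rfl, ?_, ?_⟩
    · rintro a b (rfl | ⟨h1, h2⟩)
      · exact Or.inl rfl
      · exact Or.inr ⟨h2, h1⟩
    · rintro a b c (rfl | ⟨h1, h2⟩) h
      · exact h
      · rcases h with rfl | ⟨h3, h4⟩
        · exact Or.inr ⟨h1, h2⟩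
        · exact Or.inr ⟨h1, h4⟩

/-- The element `x_i` of the left-modular chain: its unique non-singleton block is
`[i-1] ∪ {n}` (in 1-based terms), i.e. the elements with value `< i-1` or value `n-1`. -/
def xChain (n i : ℕ) : Setoid (Fin n) :=
  blockSetoid {a : Fin n | a.val + 1 < i ∨ a.val = n - 1}

/-- The noncrossing closure: the smallest noncrossing partition above `x`. -/
def ncClosure {n : ℕ} (x : Setoid (Fin n)) : Setoid (Fin n) :=
  sInf {y | IsNoncrossing y ∧ x ≤ y}

/-- The join of two noncrossing partitions in `NC_n`. -/
def joinNC {n : ℕ} (x y : Setoid (Fin n)) : Setoid (Fin n) :=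
  ncClosure (x ⊔ y)

/-- The join of a set of noncrossing partitions in `NC_n`. -/
def joinSetNC {n : ℕ} (X : Set (Setoid (Fin n))) : Setoid (Fin n) :=
  ncClosure (sSup X)

/-- Membership in `PE_n`: noncrossing, `{n-1, n}` is not a block, and it is not the case
that `{n}` is a singleton block while `1 ∼ n-1`. -/
def PEmem {n : ℕ} (x : Setoid (Fin n)) : Prop :=
  IsNoncrossing x ∧
  ¬ IsBlock x {a : Fin n | a.val = n - 2 ∨ a.val = n - 1} ∧
  ¬ (IsBlock x {a : Fin n | a.val = n - 1} ∧
      ∃ a b : Fin n, a.val = 0 ∧ b.val = n - 2 ∧ x.r a b)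

/-- `m` is the meet of `x` and `y` in the poset `PE_n`. -/
def IsMeetPE {n : ℕ} (x y m : Setoid (Fin n)) : Prop :=
  PEmem m ∧ m ≤ x ∧ m ≤ y ∧ ∀ z, PEmem z → z ≤ x → z ≤ y → z ≤ m

/-- `j` is the join of `x` and `y` in the poset `PE_n`. -/
def IsJoinPE {n : ℕ} (x y j : Setoid (Fin n)) : Prop :=
  PEmem j ∧ x ≤ j ∧ y ≤ j ∧ ∀ z, PEmem z → x ≤ z → y ≤ z → j ≤ z

/-- `x ⋖ y` in `PE_n`. -/
def CovPE {n : ℕ} (x y : Setoid (Fin n)) : Prop :=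
  PEmem x ∧ PEmem y ∧ x < y ∧ ∀ z, PEmem z → x < z → ¬ z < y

/-- The atoms of `NC_n`: partitions `a_{i,j}` with unique non-singleton block `{i, j}`. -/
def IsAtomNC {n : ℕ} (a : Setoid (Fin n)) : Prop :=
  ∃ i j : Fin n, i < j ∧ a = blockSetoid {i, j}

/-- The partial order `≼` on atoms of `NC_n` induced by the classes
`A_j = {a : a ≤ x_j and a ≰ x_{j-1}}`. -/
def atomPrec {n : ℕ} (a b : Setoid (Fin n)) : Prop :=
  ∃ i j : ℕ, 1 ≤ i ∧ i < j ∧ j ≤ n - 1 ∧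
    (a ≤ xChain n i ∧ ¬ a ≤ xChain n (i - 1)) ∧
    (b ≤ xChain n j ∧ ¬ b ≤ xChain n (j - 1))

/-- A set of atoms of `NC_n` is bounded below (BB). -/
def IsBBset {n : ℕ} (X : Set (Setoid (Fin n))) : Prop :=
  ∀ d ∈ X, ∃ a, IsAtomNC a ∧ atomPrec a d ∧ a < joinSetNC X

/-- A set of atoms of `NC_n` is NBB: no nonempty subset is bounded below. -/
def IsNBBset {n : ℕ} (X : Set (Setoid (Fin n))) : Prop :=
  ∀ Y ⊆ X, Y.Nonempty → ¬ IsBBset Y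

/-- `X` is an NBB base for the top element of `NC_n`. -/
def IsNBBBaseTop {n : ℕ} (X : Set (Setoid (Fin n))) : Prop :=
  (∀ a ∈ X, IsAtomNC a) ∧ IsNBBset X ∧ joinSetNC X = ⊤

/-- The graph `τ(X)` on vertex set `[n]` associated with a set `X` of atoms:
`i` and `j` are adjacent iff `a_{i,j} ∈ X`. -/
def atomGraph {n : ℕ} (X : Set (Setoid (Fin n))) : SimpleGraph (Fin n) where
  Adj i j := i ≠ j ∧ blockSetoid ({i, j} : Set (Fin n)) ∈ X
  symm := ⟨by
    rintro i j ⟨hne, hm⟩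
    exact ⟨hne.symm, by rwa [Set.pair_comm]⟩⟩
  loopless := ⟨fun i h => h.1 rfl⟩

/-- The parking label of the cover `x ⋖ y` is `p`: `y` merges blocks `B₁, B₂` of `x` with
`min B₁ < min B₂`, and `p = max { j ∈ B₁ : j ≤ i for all i ∈ B₂ }`. -/
def ParkingLabelIs {n : ℕ} (x y : Setoid (Fin n)) (p : Fin n) : Prop :=
  ∃ B₁ B₂ : Set (Fin n), IsBlock x B₁ ∧ IsBlock x B₂ ∧ B₁ ≠ B₂ ∧
    IsBlock y (B₁ ∪ B₂) ∧
    (∃ a ∈ B₁, ∀ b ∈ B₂, a < b) ∧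
    p ∈ B₁ ∧ (∀ i ∈ B₂, p ≤ i) ∧ (∀ j ∈ B₁, (∀ i ∈ B₂, j ≤ i) → j ≤ p)

/-- The label of the cover `w ⋖ z` in the `S_n` EL-labeling of `PE_n` coming from the
left-modular chain: `λ(w,z) = min { i-1 : x_i ≰ w and x_i ≤ z }`. -/
def LabelIs (n : ℕ) (w z : Setoid (Fin n)) (v : ℕ) : Prop :=
  ∃ i : ℕ, 1 ≤ i ∧ i ≤ n ∧ i - 1 = v ∧ (¬ xChain n i ≤ w ∧ xChain n i ≤ z) ∧
    ∀ j : ℕ, 1 ≤ j → j ≤ n → (¬ xChain n j ≤ w ∧ xChain n j ≤ z) → i ≤ j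

/-- The sequence of edge labels along a (saturated) chain, recorded as a list. -/
def chainLabels {α Λ : Type*} (lab : α → α → Λ) (c : List α) : List Λ :=
  List.zipWith lab c c.tail

/-- `c` is a saturated chain from `a` to `b` with respect to the cover relation `cov`. -/
def IsSatChainList {α : Type*} (cov : α → α → Prop) (a b : α) (c : List α) : Prop :=
  c.head? = some a ∧ c.getLast? = some b ∧ c.Chain' cov

/-- A chain is rising if its label sequence is strictly increasing. -/
def RisingChain {α Λ : Type*} [LT Λ] (lab : α → α → Λ) (c : List α) : Prop :=
  (chainLabels lab c).Chain' (· < ·)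

/-- `lab` is an EL-labeling with respect to the cover relation `cov` and order `le`:
every interval has a unique rising maximal chain, which is lexicographically least. -/
def IsELLabeling {α Λ : Type*} [PartialOrder Λ] (cov : α → α → Prop) (le : α → α → Prop)
    (lab : α → α → Λ) : Prop :=
  ∀ a b, le a b → ∃ c : List α, IsSatChainList cov a b c ∧ RisingChain lab c ∧
    (∀ c', IsSatChainList cov a b c' → RisingChain lab c' → c' = c) ∧
    (∀ c', IsSatChainList cov a b c' → c' ≠ c →
      List.Lex (· < ·) (chainLabels lab c) (chainLabels lab c'))

/-!
The block of `x_i` is `{1, …, i-1} ∪ {n}`, a cyclic interval of `[n]`. If `y` is noncrossing,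
merging all blocks of `y` that meet a cyclic interval keeps it noncrossing, so the join of `y`
and `x_i` in `NC_n` is their join in the full partition lattice `Π_n`. A partition with a single
non-singleton block is left-modular in `Π_n`, and meets of noncrossing partitions are
noncrossing; hence `x_i` is left-modular in `NC_n`. Finally `x_{i+1}` adds one element to the
block of `x_i`, so consecutive `x_i` are covers already in `Π_n` and the chain is maximal.
-/

open Set

theorem IsMaxChain.preimage_subtype_val {α : Type*} {r : α → α → Prop} {p : α → Prop}
    {s : Set α} (hs : IsMaxChain r s) (hp : ∀ x ∈ s, p x) :
    IsMaxChain (fun a b : Subtype p => r a.val b.val) (Subtype.val ⁻¹' s) := by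
  refine ⟨fun x hx y hy hxy => hs.1 hx hy (Subtype.val_injective.ne hxy), fun t ht hst => ?_⟩
  have hval : s = Subtype.val '' t :=
    hs.2 (ht.image_of_map_rel _ _ Subtype.val fun _ _ h => h)
      fun x hx => ⟨⟨x, hp x hx⟩, hst hx, rfl⟩
  exact hst.antisymm fun x hx => show x.val ∈ s from hval ▸ mem_image_of_mem _ hx

def mergeBlocks {α : Type*} (y : Setoid α) (S : Set α) : Setoid α where
  r a b := y.r a b ∨ ((∃ s ∈ S, y.r a s) ∧ ∃ t ∈ S, y.r b t)
  iseqv := by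
    refine ⟨fun a => Or.inl (y.refl a), ?_, ?_⟩
    · rintro a b (h | ⟨ha, hb⟩)
      exacts [Or.inl (y.symm h), Or.inr ⟨hb, ha⟩]
    · rintro a b c (h | ⟨ha, hb⟩) (h' | ⟨hb', hc⟩)
      · exact Or.inl (y.trans h h')
      · exact Or.inr ⟨hb'.imp fun s hs => ⟨hs.1, y.trans h hs.2⟩, hc⟩
      · exact Or.inr ⟨ha, hb.imp fun t ht => ⟨ht.1, y.trans (y.symm h') ht.2⟩⟩
      · exact Or.inr ⟨ha, hc⟩

section

variable {n : ℕ}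

theorem blockSetoid_mono : Monotone (blockSetoid (n := n)) :=
  fun _ _ h _ _ hab => hab.imp_right (And.imp (@h _) (@h _))

theorem blockSetoid_eq_bot {S : Set (Fin n)} (hS : S.Subsingleton) : blockSetoid S = ⊥ :=
  le_bot_iff.1 fun _ _ hab => hab.elim id fun ⟨ha, hb⟩ => hS ha hb

theorem blockSetoid_univ : blockSetoid (univ : Set (Fin n)) = ⊤ :=
  eq_top_iff.2 fun _ _ _ => Or.inr ⟨trivial, trivial⟩

theorem blockSetoid_covBy_insert {S : Set (Fin n)} {a : Fin n} (ha : a ∉ S)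
    (hS : S.Nonempty) : blockSetoid S ⋖ blockSetoid (insert a S) := by
  obtain ⟨s, hs⟩ := hS
  have hlt : blockSetoid S < blockSetoid (insert a S) := by
    refine (blockSetoid_mono (subset_insert a S)).lt_of_not_ge fun hle => ?_
    rcases hle (Or.inr ⟨mem_insert a S, mem_insert_of_mem a hs⟩ :
      (blockSetoid (insert a S)).r a s) with rfl | ⟨ha', -⟩
    exacts [ha hs, ha ha']
  refine covBy_iff_lt_and_eq_or_eq.2 ⟨hlt, fun w hSw hwa => ?_⟩
  by_cases hw : w ≤ blockSetoid S
  · exact Or.inl (le_antisymm hw hSw)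
  right
  obtain ⟨u, v, huv, hnot⟩ : ∃ u v, w.r u v ∧ ¬ (blockSetoid S).r u v := by
    simpa [Setoid.le_def] using hw
  have hlink : ∃ t ∈ S, w.r a t := by
    rcases hwa huv with rfl | ⟨rfl | hu, rfl | hv⟩
    · exact (hnot (Or.inl rfl)).elim
    · exact (hnot (Or.inl rfl)).elim
    · exact ⟨v, hv, huv⟩
    · exact ⟨u, hu, w.symm huv⟩
    · exact (hnot (Or.inr ⟨hu, hv⟩)).elim
  obtain ⟨t, ht, hat⟩ := hlink
  have hto : ∀ p ∈ insert a S, w.r p t := by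
    rintro p (rfl | hp)
    exacts [hat, hSw (Or.inr ⟨hp, ht⟩)]
  refine le_antisymm hwa ?_
  rintro p q (rfl | ⟨hp, hq⟩)
  exacts [w.refl p, w.trans (hto p hp) (w.symm (hto q hq))]

theorem sup_blockSetoid_eq_mergeBlocks (y : Setoid (Fin n)) (S : Set (Fin n)) :
    y ⊔ blockSetoid S = mergeBlocks y S := by
  refine le_antisymm (sup_le (fun _ _ h => Or.inl h) ?_) ?_
  · rintro a b (rfl | ⟨ha, hb⟩)
    exacts [Or.inl (y.refl a), Or.inr ⟨⟨a, ha, y.refl a⟩, b, hb, y.refl b⟩]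
  · rintro a b (h | ⟨⟨s, hs, has⟩, t, ht, hbt⟩)
    · exact le_sup_left (b := blockSetoid S) h
    · exact (y ⊔ blockSetoid S).trans (le_sup_left (b := blockSetoid S) has) <|
        (y ⊔ blockSetoid S).trans
          (le_sup_right (a := y) (Or.inr ⟨hs, ht⟩ : (blockSetoid S).r s t))
          (le_sup_left (b := blockSetoid S) (y.symm hbt))

theorem sup_blockSetoid_inf_of_le {y z : Setoid (Fin n)} (S : Set (Fin n)) (hyz : y ≤ z) :
    (y ⊔ blockSetoid S) ⊓ z = y ⊔ (blockSetoid S ⊓ z) := by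
  refine le_antisymm ?_ (sup_le (le_inf le_sup_left hyz) (inf_le_inf_right z le_sup_right))
  rw [sup_blockSetoid_eq_mergeBlocks]
  rintro a b ⟨h | ⟨⟨s, hs, has⟩, t, ht, hbt⟩, hz⟩
  · exact le_sup_left (b := blockSetoid S ⊓ z) h
  · have hst : (blockSetoid S ⊓ z).r s t :=
      ⟨Or.inr ⟨hs, ht⟩, z.trans (z.symm (hyz has)) (z.trans hz (hyz hbt))⟩
    exact (y ⊔ (blockSetoid S ⊓ z)).trans (le_sup_left (b := blockSetoid S ⊓ z) has) <|
      (y ⊔ (blockSetoid S ⊓ z)).trans (le_sup_right (a := y) hst)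
        (le_sup_left (b := blockSetoid S ⊓ z) (y.symm hbt))

theorem isNoncrossing_blockSetoid (S : Set (Fin n)) : IsNoncrossing (blockSetoid S) := by
  rintro i j k l hij hjk hkl (rfl | ⟨hi, -⟩) hjl
  · exact (hij.trans hjk).false.elim
  rcases hjl with rfl | ⟨hj, -⟩
  · exact (hjk.trans hkl).false.elim
  exact Or.inr ⟨hi, hj⟩

theorem IsNoncrossing.inf {x z : Setoid (Fin n)} (hx : IsNoncrossing x) (hz : IsNoncrossing z) :
    IsNoncrossing (x ⊓ z) :=
  fun i j k l hij hjk hkl hik hjl =>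
    ⟨hx i j k l hij hjk hkl hik.1 hjl.1, hz i j k l hij hjk hkl hik.2 hjl.2⟩

/-- `S` is a cyclic interval, so the block of `q`, nested under the arc `p ∼ r`, can reach `S`
only if it is the block of `p` or the block of `p` reaches `S` too. -/
theorem IsNoncrossing.exists_mem_rel_or_rel {y : Setoid (Fin n)} (hy : IsNoncrossing y)
    {S : Set (Fin n)} (hS : Sᶜ.OrdConnected) {p q r s : Fin n} (hpq : p < q) (hqr : q < r)
    (hpr : y.r p r) (hs : s ∈ S) (hqs : y.r q s) : (∃ t ∈ S, y.r p t) ∨ y.r p q := by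
  by_cases hp : p ∈ S
  · exact Or.inl ⟨p, hp, y.refl p⟩
  by_cases hr : r ∈ S
  · exact Or.inl ⟨r, hr, hpr⟩
  rcases lt_or_gt_of_ne (ne_of_mem_of_not_mem hs hp) with hsp | hps
  · exact Or.inl ⟨s, hs, y.symm (hy s p q r hsp hpq hqr (y.symm hqs) hpr)⟩
  · have hrs : r < s := lt_of_not_ge fun hsr => hS.out hp hr ⟨hps.le, hsr⟩ hs
    exact Or.inr (hy p q r s hpq hqr hrs hpr hqs)

theorem IsNoncrossing.sup_blockSetoid {y : Setoid (Fin n)} (hy : IsNoncrossing y)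
    {S : Set (Fin n)} (hS : Sᶜ.OrdConnected) : IsNoncrossing (y ⊔ blockSetoid S) := by
  rw [sup_blockSetoid_eq_mergeBlocks]
  intro a b c d hab hbc hcd hac hbd
  rcases hac with hac | ⟨ha, hc⟩ <;> rcases hbd with hbd | ⟨hb, hd⟩
  · exact Or.inl (hy a b c d hab hbc hcd hac hbd)
  · obtain ⟨s, hs, hbs⟩ := hb
    rcases hy.exists_mem_rel_or_rel hS hab hbc hac hs hbs with ha | hab'
    exacts [Or.inr ⟨ha, s, hs, hbs⟩, Or.inl hab']
  · obtain ⟨s, hs, hcs⟩ := hc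
    rcases hy.exists_mem_rel_or_rel hS hbc hcd hbd hs hcs with hb | hbc'
    exacts [Or.inr ⟨ha, hb⟩, Or.inr ⟨ha, s, hs, y.trans hbc' hcs⟩]
  · exact Or.inr ⟨ha, hb⟩

theorem ncClosure_eq_self {x : Setoid (Fin n)} (hx : IsNoncrossing x) : ncClosure x = x :=
  le_antisymm (sInf_le ⟨hx, le_rfl⟩) (le_sInf fun _ hy => hy.2)

theorem joinNC_eq_sup {x y : Setoid (Fin n)} (h : IsNoncrossing (x ⊔ y)) : joinNC x y = x ⊔ y :=
  ncClosure_eq_self h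

theorem ordConnected_compl_xChain_block (n i : ℕ) :
    ({a : Fin n | a.val + 1 < i ∨ a.val = n - 1}ᶜ).OrdConnected := by
  refine ⟨fun a ha b hb c hc => ?_⟩
  simp only [mem_compl_iff, mem_ofPred_eq, not_or, mem_Icc, Fin.le_def] at ha hb hc ⊢
  omega

theorem xChain_mono : Monotone (xChain n) :=
  fun _ _ hij => blockSetoid_mono fun _ ha => ha.imp_left (lt_of_lt_of_le · hij)

theorem xChain_one : xChain n 1 = ⊥ :=
  blockSetoid_eq_bot fun a ha b hb => Fin.ext (by simp only [mem_ofPred_eq] at ha hb; omega)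

theorem xChain_self : xChain n n = ⊤ :=
  (congrArg blockSetoid (eq_univ_of_forall fun a => by
    simp only [mem_ofPred_eq]; omega)).trans blockSetoid_univ

theorem xChain_covBy {k : ℕ} (hk : 1 ≤ k) (hkn : k < n) : xChain n k ⋖ xChain n (k + 1) := by
  have hblock : {a : Fin n | a.val + 1 < k + 1 ∨ a.val = n - 1} =
      insert ⟨k - 1, by omega⟩ {a : Fin n | a.val + 1 < k ∨ a.val = n - 1} := by
    ext a
    simp only [mem_ofPred_eq, mem_insert_iff, Fin.ext_iff]
    omega
  unfold xChain
  rw [hblock]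
  exact blockSetoid_covBy_insert (by simp only [mem_ofPred_eq]; omega)
    ⟨⟨n - 1, by omega⟩, Or.inr rfl⟩

theorem isMaxChain_xChain (hn : 1 ≤ n) :
    IsMaxChain (· ≤ ·) {s : Setoid (Fin n) | ∃ i, 1 ≤ i ∧ i ≤ n ∧ s = xChain n i} := by
  obtain ⟨m, rfl⟩ : ∃ m, n = m + 1 := ⟨n - 1, by omega⟩
  have hrange : {s : Setoid (Fin (m + 1)) | ∃ i, 1 ≤ i ∧ i ≤ m + 1 ∧ s = xChain (m + 1) i} =
      range fun k : Fin (m + 1) => xChain (m + 1) (k + 1) := by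
    ext s
    constructor
    · rintro ⟨i, hi, him, rfl⟩
      exact ⟨⟨i - 1, by omega⟩, congrArg _ (Nat.sub_add_cancel hi)⟩
    · rintro ⟨k, rfl⟩
      exact ⟨k + 1, by omega, by omega, rfl⟩
  rw [hrange]
  exact IsMaxChain.range_fin_of_covBy (by simpa using xChain_one) (by simpa using xChain_self)
    fun k => by simpa using (xChain_covBy (k := k + 1) (by omega) (by omega)).wcovBy

end

/-- For `n ≥ 1`, the noncrossing partition lattice `(NC_n, ≤_dref)` is a
supersolvable lattice with M-chain `0̂ = x_1 < x_2 < ... < x_n = 1̂`: the elements `x_i`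
are noncrossing, form a maximal chain of `NC_n` from the discrete partition to the full
partition, and every `x_i` is left-modular. -/
theorem NC_supersolvable (n : ℕ) (hn : 1 ≤ n) :
    (∀ i, 1 ≤ i → i ≤ n → IsNoncrossing (xChain n i)) ∧
    xChain n 1 = ⊥ ∧ xChain n n = ⊤ ∧
    (∀ i j, 1 ≤ i → i < j → j ≤ n → xChain n i < xChain n j) ∧
    IsMaxChain (fun a b : {s : Setoid (Fin n) // IsNoncrossing s} => a.val ≤ b.val)
      {x : {s : Setoid (Fin n) // IsNoncrossing s} | ∃ i, 1 ≤ i ∧ i ≤ n ∧ x.val = xChain n i} ∧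
    (∀ i, 1 ≤ i → i ≤ n → ∀ y z : Setoid (Fin n), IsNoncrossing y → IsNoncrossing z →
      y ≤ z → joinNC y (xChain n i) ⊓ z = joinNC y (xChain n i ⊓ z)) := by
  refine ⟨fun i _ _ => isNoncrossing_blockSetoid _, xChain_one, xChain_self,
    fun i j hi hij hjn => (xChain_covBy hi (by omega)).lt.trans_le (xChain_mono (by omega)),
    ?_, fun i _ _ y z hy hz hyz => ?_⟩
  · exact (isMaxChain_xChain hn).preimage_subtype_val fun _ ⟨_, _, _, hs⟩ =>
      hs ▸ isNoncrossing_blockSetoid _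
  · have hyx : IsNoncrossing (y ⊔ xChain n i) :=
      hy.sup_blockSetoid (ordConnected_compl_xChain_block n i)
    have hmod : (y ⊔ xChain n i) ⊓ z = y ⊔ (xChain n i ⊓ z) := sup_blockSetoid_inf_of_le _ hyz
    rw [joinNC_eq_sup hyx, joinNC_eq_sup (hmod ▸ hyx.inf hz), hmod]
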